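/- The sequence d_n defined by H_n = ln(n + 1/2) + γ + 1/(24(n+1/2)^2 + d_n) is strictly monotonically increasing in n ≥ 1. -/

import Mathlib

/-
Write g n = H n - log (n + 1/2) - γ, so that d n = 1 / g n - 24 (n + 1/2)² and
d (n+1) - d n = (g n - g (n+1)) / (g n * g (n+1)) - 48 (n + 1).
The step g n - g (n+1) = log (1 + x) - log (1 - x) - 2x, x = 1 / (2n + 2), is squeezed between
truncations of the series of artanh. Telescoping the upper estimate against
b n = 1 / (24 t² + 21/5 - 7 / (4 t²)), t = n + 1/2, gives g n ≤ b n.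
Writing g n = g (n+1) + (g n - g (n+1)), the inequality d n < d (n+1) then only needs the upper
bound b (n+1) for g (n+1) and the lower estimate for the step, and becomes a polynomial inequality
in n all of whose coefficients are positive.
-/

open Real Filter

noncomputable def H (n : ℕ) : ℝ := ∑ i ∈ Finset.range n, (1 : ℝ) / (i + 1)

noncomputable def d (n : ℕ) : ℝ :=
  1 / (H n - Real.log (n + 1 / 2) - Real.eulerMascheroniConstant) - 24 * (n + 1 / 2 : ℝ) ^ 2

open Topology Finset

lemma H_eq_harmonic (n : ℕ) : H n = harmonic n := by
  simp [H, harmonic]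

noncomputable def harmonicGap (n : ℕ) : ℝ := H n - log (n + 1 / 2) - eulerMascheroniConstant

lemma tendsto_harmonicGap : Tendsto harmonicGap atTop (𝓝 0) := by
  have h := (tendsto_harmonic_sub_log.sub_const eulerMascheroniConstant).sub
    ((tendsto_log_comp_add_sub_log (1 / 2)).comp tendsto_natCast_atTop_atTop)
  rw [sub_self, sub_zero] at h
  refine h.congr fun n => ?_
  simp only [harmonicGap, H_eq_harmonic, Function.comp_apply]
  ring

lemma harmonicGap_sub_succ (n : ℕ) :
    harmonicGap n - harmonicGap (n + 1) =
      log (1 + 1 / (2 * n + 2)) - log (1 - 1 / (2 * n + 2)) - 2 * (1 / (2 * n + 2)) := by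
  have hv : (2 * n + 2 : ℝ) ≠ 0 := by positivity
  have e₁ : 1 + 1 / (2 * n + 2 : ℝ) = (2 * n + 3) / (2 * n + 2) := by field_simp; ring
  have e₂ : 1 - 1 / (2 * n + 2 : ℝ) = (2 * n + 1) / (2 * n + 2) := by field_simp; ring
  have e₃ : ((n + 1 : ℕ) : ℝ) + 1 / 2 = (2 * n + 3) / 2 := by push_cast; ring
  have e₄ : (n : ℝ) + 1 / 2 = (2 * n + 1) / 2 := by ring
  simp only [harmonicGap, H, sum_range_succ]
  rw [e₁, e₂, e₃, e₄, log_div (by positivity) hv, log_div (by positivity) hv,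
    log_div (by positivity) two_ne_zero, log_div (by positivity) two_ne_zero]
  field_simp
  ring

lemma sum_range_le_log_sub_log {x : ℝ} (hx₀ : 0 ≤ x) (hx₁ : x < 1) (N : ℕ) :
    ∑ k ∈ range N, 2 * (1 / (2 * k + 1)) * x ^ (2 * k + 1) ≤ log (1 + x) - log (1 - x) :=
  sum_le_hasSum _ (fun _ _ => by positivity)
    (hasSum_log_sub_log_of_abs_lt_one (by rwa [abs_of_nonneg hx₀]))

lemma log_sub_log_le_sum_range_add {x : ℝ} (hx₀ : 0 ≤ x) (hx₁ : x < 1) (N : ℕ) :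
    log (1 + x) - log (1 - x) ≤ ∑ k ∈ range N, 2 * (1 / (2 * k + 1)) * x ^ (2 * k + 1)
      + 2 * (1 / (2 * N + 1)) * x ^ (2 * N + 1) / (1 - x ^ 2) := by
  have hseries := hasSum_log_sub_log_of_abs_lt_one (by rwa [abs_of_nonneg hx₀])
  have htail := (hasSum_nat_add_iff' N).mpr hseries
  have hgeom := (hasSum_geometric_of_lt_one (sq_nonneg x) (by nlinarith)).mul_left
    (2 * (1 / (2 * N + 1)) * x ^ (2 * N + 1))
  have hle := hasSum_le (fun k => ?_) htail hgeom
  · rw [div_eq_mul_inv]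
    linarith
  · push_cast
    rw [show 2 * (k + N) + 1 = 2 * N + 1 + 2 * k by ring, pow_add, pow_mul, ← mul_assoc]
    gcongr
    exact le_add_of_nonneg_left k.cast_nonneg

lemma le_harmonicGap_sub_succ (n : ℕ) :
    2 / (3 * (2 * n + 2 : ℝ) ^ 3) + 2 / (5 * (2 * n + 2 : ℝ) ^ 5) ≤
      harmonicGap n - harmonicGap (n + 1) := by
  have hx₀ : (0 : ℝ) ≤ 1 / (2 * n + 2) := by positivity
  have hx₁ : 1 / (2 * n + 2 : ℝ) < 1 := by
    rw [div_lt_one (by positivity)]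
    linarith [n.cast_nonneg (α := ℝ)]
  rw [harmonicGap_sub_succ]
  calc 2 / (3 * (2 * n + 2 : ℝ) ^ 3) + 2 / (5 * (2 * n + 2 : ℝ) ^ 5)
      = ∑ k ∈ range 3, 2 * (1 / (2 * k + 1)) * (1 / (2 * n + 2 : ℝ)) ^ (2 * k + 1)
          - 2 * (1 / (2 * n + 2)) := by
        norm_num [sum_range_succ]
        field_simp
        ring
    _ ≤ _ := by gcongr; exact sum_range_le_log_sub_log hx₀ hx₁ 3

lemma harmonicGap_sub_succ_le (n : ℕ) :
    harmonicGap n - harmonicGap (n + 1) ≤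
      2 / (3 * (2 * n + 2 : ℝ) ^ 3) + 2 / (5 * (2 * n + 2 : ℝ) ^ 3 * (2 * n + 1) * (2 * n + 3)) := by
  have hx₀ : (0 : ℝ) ≤ 1 / (2 * n + 2) := by positivity
  have hx₁ : 1 / (2 * n + 2 : ℝ) < 1 := by
    rw [div_lt_one (by positivity)]
    linarith [n.cast_nonneg (α := ℝ)]
  have hx₂ : 1 - (1 / (2 * n + 2 : ℝ)) ^ 2 = (2 * n + 1) * (2 * n + 3) / (2 * n + 2) ^ 2 := by
    field_simp
    ring
  rw [harmonicGap_sub_succ]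
  calc _ ≤ ∑ k ∈ range 2, 2 * (1 / (2 * k + 1)) * (1 / (2 * n + 2 : ℝ)) ^ (2 * k + 1)
          + 2 * (1 / (2 * (2 : ℕ) + 1)) * (1 / (2 * n + 2 : ℝ)) ^ (2 * 2 + 1)
            / (1 - (1 / (2 * n + 2 : ℝ)) ^ 2) - 2 * (1 / (2 * n + 2)) := by
        gcongr; exact log_sub_log_le_sum_range_add hx₀ hx₁ 2
    _ = _ := by
        rw [hx₂]
        norm_num [sum_range_succ]
        field_simp
        ring

lemma strictAnti_harmonicGap : StrictAnti harmonicGap :=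
  strictAnti_nat_of_succ_lt fun n => sub_pos.mp <|
    lt_of_lt_of_le (by positivity) (le_harmonicGap_sub_succ n)

lemma harmonicGap_pos (n : ℕ) : 0 < harmonicGap n :=
  (strictAnti_harmonicGap.antitone.le_of_tendsto tendsto_harmonicGap (n + 1)).trans_lt
    (strictAnti_harmonicGap n.lt_succ_self)

lemma le_of_tendsto_of_sub_succ_le {a b : ℕ → ℝ} {l : ℝ} (ha : Tendsto a atTop (𝓝 l))
    (hb : Tendsto b atTop (𝓝 l)) (h : ∀ n, a n - a (n + 1) ≤ b n - b (n + 1)) (n : ℕ) :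
    a n ≤ b n := by
  have hmono : Monotone (a - b) :=
    monotone_nat_of_le_succ fun k => by simp only [Pi.sub_apply]; linarith [h k]
  have hlim : Tendsto (a - b) atTop (𝓝 (l - l)) := ha.sub hb
  rw [sub_self] at hlim
  simpa [sub_nonpos] using hmono.ge_of_tendsto hlim n

-- `1 / (24 t² + 21/5 - 7 / (4 t²))` with `t = n + 1/2`, so `harmonicGap n ≤ harmonicGapBound n`
-- says `21/5 - 7 / (4 t²) ≤ d n`.
noncomputable def harmonicGapBound (n : ℕ) : ℝ :=
  ((n : ℝ) + 1 / 2) ^ 2 / (24 * ((n : ℝ) + 1 / 2) ^ 4 + 21 / 5 * ((n : ℝ) + 1 / 2) ^ 2 - 7 / 4)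

lemma harmonicGapBound_denom_pos {y : ℝ} (hy : 0 ≤ y) :
    0 < 24 * (y + 1 / 2) ^ 4 + 21 / 5 * (y + 1 / 2) ^ 2 - 7 / 4 := by
  have ht : (1 : ℝ) / 2 ≤ y + 1 / 2 := by linarith
  nlinarith [pow_le_pow_left₀ (by norm_num) ht 2, pow_le_pow_left₀ (by norm_num) ht 4]

lemma tendsto_harmonicGapBound : Tendsto harmonicGapBound atTop (𝓝 0) := by
  refine squeeze_zero (fun n => ?_) (fun n => ?_) tendsto_one_div_add_atTop_nhds_zero_nat
  · exact div_nonneg (by positivity) (harmonicGapBound_denom_pos n.cast_nonneg).le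
  · have h := harmonicGapBound_denom_pos n.cast_nonneg
    rw [harmonicGapBound, div_le_div_iff₀ h (by positivity)]
    have hn : (0 : ℝ) ≤ n := n.cast_nonneg
    nlinarith [pow_nonneg hn 2, pow_nonneg hn 3, pow_nonneg hn 4]

lemma le_harmonicGapBound_sub_succ (n : ℕ) :
    2 / (3 * (2 * n + 2 : ℝ) ^ 3) + 2 / (5 * (2 * n + 2 : ℝ) ^ 3 * (2 * n + 1) * (2 * n + 3))
      ≤ harmonicGapBound n - harmonicGapBound (n + 1) := by
  have h₀ := harmonicGapBound_denom_pos n.cast_nonneg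
  have h₁ := harmonicGapBound_denom_pos (by positivity : (0 : ℝ) ≤ n + 1)
  rw [harmonicGapBound, harmonicGapBound, Nat.cast_succ, div_sub_div _ _ h₀.ne' h₁.ne',
    div_add_div _ _ (by positivity) (by positivity),
    div_le_div_iff₀ (by positivity) (mul_pos h₀ h₁), ← sub_nonneg]
  ring_nf
  positivity

lemma harmonicGap_le_harmonicGapBound (n : ℕ) : harmonicGap n ≤ harmonicGapBound n :=
  le_of_tendsto_of_sub_succ_le tendsto_harmonicGap tendsto_harmonicGapBound
    (fun k => (harmonicGap_sub_succ_le k).trans (le_harmonicGapBound_sub_succ k)) n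

lemma mul_harmonicGapBound_succ_sq_lt (n : ℕ) :
    48 * ((n : ℝ) + 1) * harmonicGapBound (n + 1) ^ 2 <
      (2 / (3 * (2 * n + 2 : ℝ) ^ 3) + 2 / (5 * (2 * n + 2 : ℝ) ^ 5)) *
        (1 - 48 * ((n : ℝ) + 1) * harmonicGapBound (n + 1)) := by
  have h₁ := harmonicGapBound_denom_pos (by positivity : (0 : ℝ) ≤ n + 1)
  rw [harmonicGapBound, Nat.cast_succ]
  set D := 24 * ((n : ℝ) + 1 + 1 / 2) ^ 4 + 21 / 5 * ((n : ℝ) + 1 + 1 / 2) ^ 2 - 7 / 4 with hD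
  field_simp
  rw [← sub_pos, hD]
  ring_nf
  positivity

lemma mul_mul_lt_sub_of_le {c g₀ g₁ h ℓ : ℝ} (hc : 0 ≤ c) (hg₁ : 0 ≤ g₁) (hg₁h : g₁ ≤ h)
    (hℓ : 0 ≤ ℓ) (hℓg : ℓ ≤ g₀ - g₁) (hbound : c * h ^ 2 < ℓ * (1 - c * h)) :
    c * (g₀ * g₁) < g₀ - g₁ := by
  have hch : 0 < 1 - c * h := by
    by_contra! hneg
    nlinarith [mul_nonpos_of_nonneg_of_nonpos hℓ hneg, mul_nonneg hc (sq_nonneg h)]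
  nlinarith [mul_le_mul_of_nonneg_left hg₁h hc, mul_le_mul_of_nonneg_left hℓg hch.le]

lemma d_lt_d_succ (n : ℕ) : d n < d (n + 1) := by
  have hg₀ := harmonicGap_pos n
  have hg₁ := harmonicGap_pos (n + 1)
  have key : 48 * ((n : ℝ) + 1) * (harmonicGap n * harmonicGap (n + 1)) <
      harmonicGap n - harmonicGap (n + 1) :=
    mul_mul_lt_sub_of_le (by positivity) hg₁.le (harmonicGap_le_harmonicGapBound (n + 1))
      (by positivity) (le_harmonicGap_sub_succ n) (mul_harmonicGapBound_succ_sq_lt n)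
  have hd : d (n + 1) - d n = (harmonicGap n - harmonicGap (n + 1)) /
      (harmonicGap n * harmonicGap (n + 1)) - 48 * ((n : ℝ) + 1) := by
    change (1 / harmonicGap (n + 1) - _) - (1 / harmonicGap n - _) = _
    push_cast
    field_simp
    ring
  have := (lt_div_iff₀ (mul_pos hg₀ hg₁)).2 key
  linarith

lemma strictMono_d : StrictMono d := strictMono_nat_of_lt_succ d_lt_d_succ

theorem stmt5_general (m n : ℕ) (hmn : m < n) : d m < d n := strictMono_d hmn

theorem stmt5 (m n : ℕ) (hm : 1 ≤ m) (hmn : m < n) : d m < d n :=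
  stmt5_general m n hmn
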